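/- arXiv:1407.2375 — 4 statements merged into one kernel-verified Lean document; each statement's English description precedes it below -/
import Mathlib

section
/- Let n ≥ 1, y ∈ ℝ^{n²}, β > 0. Let 𝒟 : ℝ^{n²} → ℝ^{2n²} be the discrete gradient operator with periodic boundary conditions, ((𝒟x)_{i,j})₁ = x_{i+1,j} − x_{i,j}, ((𝒟x)_{i,j})₂ = x_{i,j+1} − x_{i,j} (indices mod n), and let div : ℝ^{2n²} → ℝ^{n²} be the unique linear operator satisfying ⟨𝒟x, p⟩ = −⟨x, div(p)⟩ for all x, p. Let 𝒫 = {p ∈ ℝ^{2n²} : p_i² + p_{i+n²}² ≤ 1 for all i = 1,…,n²}, and let 𝒲(p) = ‖β div(p) − y‖². If {p⁽ᵏ⁾} ⊂ 𝒫 is a sequence such that every accumulation point p̄ of {p⁽ᵏ⁾} is a stationary point of min_{p ∈ 𝒫} 𝒲(p) (i.e. ∇𝒲(p̄)ᵀ(q − p̄) ≥ 0 for all q ∈ 𝒫), then the sequence x⁽ᵏ⁾ = y − β div(p⁽ᵏ⁾) converges to the unique minimizer over ℝ^{n²} of the primal ROF functional (1/(2β))‖x − y‖² + J_R^{TV}(x),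 where J_R^{TV}(x) = Σ_{i,j=1}^n √(((𝒟x)_{i,j})₁² + ((𝒟x)_{i,j})₂²). -/
open RealInnerProductSpace Filter Topology

/-!
The isotropic total variation is a support function: `J(x) = max_{q ∈ 𝒫} ⟪𝒟x, q⟫`, and since
`𝒫 = -𝒫` also `J(x) = max_{q ∈ 𝒫} ⟪x, div q⟫`. Stationarity of `p̄` for the dual problem says
exactly that `p̄` maximises `⟪x̄, div ·⟫` over `𝒫`, where `x̄ = y - β div p̄`; expanding the square
then gives `F x̄ + ‖x - x̄‖² / (2β) ≤ F x` for every `x`. So every accumulation point of `(p⁽ᵏ⁾)`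
produces the same point, the unique minimiser of `F`, and compactness of `𝒫` turns this into
convergence of `y - β div p⁽ᵏ⁾`.
-/

theorem mul_add_mul_le_sqrt_of_sq_add_sq_le_one {a b c d : ℝ} (h : c ^ 2 + d ^ 2 ≤ 1) :
    a * c + b * d ≤ √(a ^ 2 + b ^ 2) :=
  (le_abs_self _).trans <| Real.abs_le_sqrt <| by
    nlinarith [sq_nonneg (a * d - b * c), sq_nonneg a, sq_nonneg b]

section PointwiseUnitBall

variable (ι : Type*)

def pointwiseUnitBall : Set (EuclideanSpace ℝ (ι × Fin 2)) :=
  {p | ∀ i, p (i, 0) ^ 2 + p (i, 1) ^ 2 ≤ 1}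

variable {ι} [Fintype ι]

noncomputable def l21Norm (g : EuclideanSpace ℝ (ι × Fin 2)) : ℝ :=
  ∑ i, √(g (i, 0) ^ 2 + g (i, 1) ^ 2)

theorem EuclideanSpace.inner_prod_fin_two_eq_sum (g q : EuclideanSpace ℝ (ι × Fin 2)) :
    ⟪g, q⟫ = ∑ i, (g (i, 0) * q (i, 0) + g (i, 1) * q (i, 1)) := by
  simp only [PiLp.inner_apply, Fintype.sum_prod_type, Fin.sum_univ_two, RCLike.inner_apply,
    conj_trivial]
  exact Finset.sum_congr rfl fun _ _ => by ring

omit [Fintype ι] in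
theorem neg_mem_pointwiseUnitBall {p : EuclideanSpace ℝ (ι × Fin 2)}
    (hp : p ∈ pointwiseUnitBall ι) : -p ∈ pointwiseUnitBall ι := fun i => by
  simpa using hp i

theorem isCompact_pointwiseUnitBall : IsCompact (pointwiseUnitBall ι) := by
  have hclosed : IsClosed (pointwiseUnitBall ι) := by
    simp only [pointwiseUnitBall, Set.ofPred_forall]
    exact isClosed_iInter fun i => isClosed_le (by fun_prop) continuous_const
  refine Metric.isCompact_of_isClosed_isBounded hclosed <|
    isBounded_iff_forall_norm_le.2 ⟨Fintype.card ι + 1, fun p hp => ?_⟩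
  have hsq : ‖p‖ ^ 2 ≤ Fintype.card ι := by
    rw [EuclideanSpace.real_norm_sq_eq, Fintype.sum_prod_type]
    simpa [Fin.sum_univ_two] using Finset.sum_le_sum fun i (_ : i ∈ Finset.univ) => hp i
  nlinarith [sq_nonneg (‖p‖ - 1)]

theorem isGreatest_inner_pointwiseUnitBall (g : EuclideanSpace ℝ (ι × Fin 2)) :
    IsGreatest ((fun q => ⟪g, q⟫) '' pointwiseUnitBall ι) (l21Norm g) := by
  set r : ι → ℝ := fun i => √(g (i, 0) ^ 2 + g (i, 1) ^ 2)
  -- the maximiser normalises `g` pixelwise; at pixels where `g` vanishes, `x / 0 = 0` gives `0`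
  refine ⟨⟨WithLp.toLp 2 fun z => g z / r z.1, fun i => ?_, ?_⟩, ?_⟩
  · rw [PiLp.toLp_apply, PiLp.toLp_apply, div_pow, div_pow, ← add_div,
      Real.sq_sqrt (by positivity)]
    exact div_self_le_one _
  · simp only [EuclideanSpace.inner_prod_fin_two_eq_sum, l21Norm]
    refine Finset.sum_congr rfl fun i _ => ?_
    rw [← Real.div_sqrt]
    ring
  · rintro _ ⟨q, hq, rfl⟩
    show ⟪g, q⟫ ≤ _
    rw [EuclideanSpace.inner_prod_fin_two_eq_sum]
    exact Finset.sum_le_sum fun i _ => mul_add_mul_le_sqrt_of_sq_add_sq_le_one (hq i)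

end PointwiseUnitBall

section InnerProductSpace

variable {E G : Type*} [NormedAddCommGroup E] [InnerProductSpace ℝ E]
  [NormedAddCommGroup G] [InnerProductSpace ℝ G]

theorem isLinearMap_of_inner_eq_neg {D : E → G} {dv : G → E}
    (h : ∀ x p, ⟪D x, p⟫ = -⟪x, dv p⟫) : IsLinearMap ℝ dv := by
  have hdv : ∀ x p, ⟪x, dv p⟫ = -⟪D x, p⟫ := fun x p => by rw [h, neg_neg]
  refine ⟨fun p q => ext_inner_left ℝ fun x => ?_, fun c p => ext_inner_left ℝ fun x => ?_⟩
  · rw [inner_add_right, hdv, hdv, hdv, inner_add_right, neg_add]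
  · rw [real_inner_smul_right, hdv, hdv, real_inner_smul_right, mul_neg]

theorem image_inner_image_eq_of_inner_eq_neg {D : E → G} {dv : G → E}
    (h : ∀ x p, ⟪D x, p⟫ = -⟪x, dv p⟫) {P : Set G} (hP : ∀ p ∈ P, -p ∈ P) (x : E) :
    (fun u => ⟪x, u⟫) '' (dv '' P) = (fun p => ⟪D x, p⟫) '' P := by
  have hneg : ∀ p, ⟪x, dv p⟫ = ⟪D x, -p⟫ := fun p => by rw [inner_neg_right, h, neg_neg]
  rw [Set.image_image]
  ext t
  constructor
  · rintro ⟨p, hp, rfl⟩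
    exact ⟨-p, hP p hp, (hneg p).symm⟩
  · rintro ⟨p, hp, rfl⟩
    exact ⟨-p, hP p hp, (hneg (-p)).trans (by rw [neg_neg])⟩

theorem inner_gradient_norm_sub_sq [CompleteSpace G] (A : G →L[ℝ] E) (y : E) (p v : G) :
    ⟪gradient (fun q => ‖A q - y‖ ^ 2) p, v⟫ = 2 * ⟪A p - y, A v⟫ := by
  have hderiv := (A.hasFDerivAt.sub_const y).norm_sq (x := p)
  rw [(hasFDerivAt_iff_hasGradientAt.mp hderiv).gradient, InnerProductSpace.toDual_symm_apply]
  simp [inner_sub_left]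

theorem inner_le_of_stationary_norm_sub_sq [CompleteSpace G] (A : G →L[ℝ] E) (y : E)
    {P : Set G} {pbar : G}
    (hstat : ∀ q ∈ P, 0 ≤ ⟪gradient (fun q => ‖A q - y‖ ^ 2) pbar, q - pbar⟫) :
    ∀ q ∈ P, ⟪y - A pbar, A q⟫ ≤ ⟪y - A pbar, A pbar⟫ := fun q hq => by
  have h := hstat q hq
  rw [inner_gradient_norm_sub_sq, map_sub, ← neg_sub y, inner_neg_left, inner_sub_right] at h
  linarith

theorem add_norm_sub_sq_le_of_isGreatest {y : E} {β : ℝ} (hβ : 0 < β) {S : Set E} {J : E → ℝ}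
    (hJ : ∀ x, IsGreatest ((fun u => ⟪x, u⟫) '' S) (J x)) {ubar : E} (hubar : ubar ∈ S)
    (hmax : ∀ u ∈ S, ⟪y - β • ubar, u⟫ ≤ ⟪y - β • ubar, ubar⟫) (x : E) :
    (1 / (2 * β)) * ‖(y - β • ubar) - y‖ ^ 2 + J (y - β • ubar)
        + (1 / (2 * β)) * ‖x - (y - β • ubar)‖ ^ 2
      ≤ (1 / (2 * β)) * ‖x - y‖ ^ 2 + J x := by
  set xs := y - β • ubar
  have hJxs : J xs = ⟪xs, ubar⟫ :=
    (hJ xs).unique ⟨⟨ubar, hubar, rfl⟩, by rintro _ ⟨u, hu, rfl⟩; exact hmax u hu⟩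
  have hJx : ⟪x, ubar⟫ ≤ J x := (hJ x).2 ⟨ubar, hubar, rfl⟩
  have hsplit : ‖x - y‖ ^ 2
      = ‖x - xs‖ ^ 2 + ‖xs - y‖ ^ 2 - 2 * β * ⟪x - xs, ubar⟫ := by
    have hxy : x - y = (x - xs) - β • ubar := by simp only [xs]; abel
    have hxsy : xs - y = -(β • ubar) := by simp only [xs]; abel
    rw [hxy, hxsy, norm_sub_sq_real, norm_neg, real_inner_smul_right]
    ring
  rw [hsplit, inner_sub_left, hJxs]
  field_simp
  nlinarith

end InnerProductSpace

theorem eq_of_forall_add_norm_sub_sq_le {E : Type*} [NormedAddCommGroup E] {f : E → ℝ} {c : ℝ} (hc : 0 < c) {a b : E}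
    (ha : ∀ x, f a + c * ‖x - a‖ ^ 2 ≤ f x) (hb : ∀ x, f b ≤ f x) : b = a := by
  have h : c * ‖b - a‖ ^ 2 ≤ 0 := by linarith [ha b, hb a]
  have : ‖b - a‖ ^ 2 = 0 := le_antisymm (nonpos_of_mul_nonpos_right h hc) (sq_nonneg _)
  simpa [sub_eq_zero] using this

theorem tendsto_comp_of_forall_subseq_limit {X Y : Type*} [TopologicalSpace X]
    [FirstCountableTopology X] [TopologicalSpace Y] {K : Set X} (hK : IsCompact K)
    {u : ℕ → X} (hu : ∀ k, u k ∈ K) {g : X → Y} (hg : Continuous g) {c : Y}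
    (h : ∀ x ∈ K, (∃ φ : ℕ → ℕ, StrictMono φ ∧ Tendsto (u ∘ φ) atTop (𝓝 x)) → g x = c) :
    Tendsto (g ∘ u) atTop (𝓝 c) := by
  refine tendsto_of_subseq_tendsto fun ns hns => ?_
  obtain ⟨x, hxK, ms, hms, hlim⟩ := hK.tendsto_subseq fun k => hu (ns k)
  obtain ⟨l, hl, hmono⟩ := strictMono_subseq_of_tendsto_atTop (hns.comp hms.tendsto_atTop)
  have hgx : g x = c := h x hxK ⟨ns ∘ ms ∘ l, hmono, hlim.comp hl.tendsto_atTop⟩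
  exact ⟨ms, hgx ▸ (hg.tendsto x).comp hlim⟩

/-- if every accumulation point of a sequence `{p⁽ᵏ⁾} ⊂ 𝒫` is a stationary
point of the dual ROF problem `min_{p ∈ 𝒫} ‖β div(p) − y‖²`, then `x⁽ᵏ⁾ = y − β div(p⁽ᵏ⁾)`
converges to the unique minimizer of the primal ROF functional
`(1/(2β))‖x − y‖² + J_R^{TV}(x)`. -/
theorem dual_rof_stationary_implies_primal_convergence
    (n : ℕ) [NeZero n]
    (y : EuclideanSpace ℝ (Fin n × Fin n)) (β : ℝ) (hβ : 0 < β)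
    -- the discrete gradient operator with periodic boundary conditions
    (Dop : EuclideanSpace ℝ (Fin n × Fin n) → EuclideanSpace ℝ ((Fin n × Fin n) × Fin 2))
    (hDop : ∀ (x : EuclideanSpace ℝ (Fin n × Fin n)) (i j : Fin n),
      Dop x ((i, j), 0) = x (i + 1, j) - x (i, j) ∧
      Dop x ((i, j), 1) = x (i, j + 1) - x (i, j))
    -- the discrete divergence: the (unique) operator adjoint to `−𝒟`
    (dv : EuclideanSpace ℝ ((Fin n × Fin n) × Fin 2) → EuclideanSpace ℝ (Fin n × Fin n))
    (hdv : ∀ (x : EuclideanSpace ℝ (Fin n × Fin n))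
      (p : EuclideanSpace ℝ ((Fin n × Fin n) × Fin 2)), ⟪Dop x, p⟫ = -⟪x, dv p⟫)
    -- the dual feasible set and objective
    (Pset : Set (EuclideanSpace ℝ ((Fin n × Fin n) × Fin 2)))
    (hPset : Pset = {p | ∀ q : Fin n × Fin n, (p (q, 0)) ^ 2 + (p (q, 1)) ^ 2 ≤ 1})
    (W : EuclideanSpace ℝ ((Fin n × Fin n) × Fin 2) → ℝ)
    (hW : ∀ p, W p = ‖β • dv p - y‖ ^ 2)
    -- the primal ROF functional
    (F : EuclideanSpace ℝ (Fin n × Fin n) → ℝ)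
    (hF : ∀ x, F x = (1 / (2 * β)) * ‖x - y‖ ^ 2
      + ∑ i : Fin n, ∑ j : Fin n,
          Real.sqrt ((x (i + 1, j) - x (i, j)) ^ 2 + (x (i, j + 1) - x (i, j)) ^ 2))
    -- the sequence in `𝒫` all of whose accumulation points are stationary for the dual
    (p : ℕ → EuclideanSpace ℝ ((Fin n × Fin n) × Fin 2))
    (hp : ∀ k, p k ∈ Pset)
    (hstat : ∀ pbar : EuclideanSpace ℝ ((Fin n × Fin n) × Fin 2),
      (∃ φ : ℕ → ℕ, StrictMono φ ∧
        Filter.Tendsto (fun j => p (φ j)) Filter.atTop (nhds pbar)) →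
      ∀ q ∈ Pset, 0 ≤ ⟪gradient W pbar, q - pbar⟫) :
    ∃ xstar : EuclideanSpace ℝ (Fin n × Fin n),
      (∀ x', F xstar ≤ F x') ∧
      (∀ w, (∀ x', F w ≤ F x') → w = xstar) ∧
      Filter.Tendsto (fun k => y - β • dv (p k)) Filter.atTop (nhds xstar) := by
  subst hPset
  set A := β • ((isLinearMap_of_inner_eq_neg hdv).mk' dv).toContinuousLinearMap
  have hWA : W = fun q => ‖A q - y‖ ^ 2 := funext hW
  have hFtv : ∀ x, F x = (1 / (2 * β)) * ‖x - y‖ ^ 2 + l21Norm (Dop x) := fun x => by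
    simp only [hF, l21Norm, Fintype.sum_prod_type, hDop]
  have hstrong : ∀ pbar ∈ pointwiseUnitBall (Fin n × Fin n),
      (∃ φ : ℕ → ℕ, StrictMono φ ∧ Tendsto (p ∘ φ) atTop (𝓝 pbar)) →
      ∀ x, F (y - β • dv pbar) + 1 / (2 * β) * ‖x - (y - β • dv pbar)‖ ^ 2 ≤ F x := by
    intro pbar hpbar hlim x
    have hmax := inner_le_of_stationary_norm_sub_sq A y (hWA ▸ hstat pbar hlim)
    simp only [hFtv]
    refine add_norm_sub_sq_le_of_isGreatest (J := fun x => l21Norm (Dop x)) hβ (fun x => ?_)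
      (Set.mem_image_of_mem dv hpbar) ?_ x
    · rw [image_inner_image_eq_of_inner_eq_neg hdv (fun _ => neg_mem_pointwiseUnitBall) x]
      exact isGreatest_inner_pointwiseUnitBall (Dop x)
    · rintro _ ⟨q, hq, rfl⟩
      simpa [A, real_inner_smul_right, hβ] using hmax q hq
  obtain ⟨pbar₀, hpbar₀, φ, hφ, hlim⟩ := isCompact_pointwiseUnitBall.tendsto_subseq hp
  have hmin₀ := hstrong pbar₀ hpbar₀ ⟨φ, hφ, hlim⟩
  have hc : (0 : ℝ) < 1 / (2 * β) := by positivity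
  refine ⟨y - β • dv pbar₀, fun x => by nlinarith [hmin₀ x], ?_, ?_⟩
  · exact fun w hw => eq_of_forall_add_norm_sub_sq_le hc hmin₀ hw
  · refine tendsto_comp_of_forall_subseq_limit isCompact_pointwiseUnitBall hp
      (continuous_const.sub A.continuous) fun pbar hpbar hlim => ?_
    refine (eq_of_forall_add_norm_sub_sq_le hc (hstrong pbar hpbar hlim) ?_).symm
    exact fun x => by nlinarith [hmin₀ x]
end

section
/- Let A be an N×N real matrix with nonnegative entries such that each row and each column of A has at least one positive entry, let b ∈ ℝ^N with b > 0 componentwise and y ∈ ℝ^N with y ≥ 0 componentwise. Define the Kullback–Leibler functional J₀^{KL}(x) = Σ_{i=1}^N { y_i ln(y_i/(Ax+b)_i) + (Ax+b)_i − y_i }, with the convention 0·ln 0 = 0 (so terms with y_i = 0 contribute (Ax+b)_i). Then on the nonnegative orthant {x ≥ 0}: J₀^{KL} is nonnegative, convex, and coercive (J₀^{KL}(x⁽ʲ⁾) → ∞ whenever x⁽ʲ⁾ ≥ 0, ‖x⁽ʲ⁾‖ → ∞); consequently min_{x ≥ 0} J₀^{KL}(x) has a global solution. -/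
/-! On the orthant `t = Ax + b` is positive. Each summand `y log (y/t) + t - y` equals
`t · klFun (y/t) ≥ 0`, and up to a constant it is `t - y log t`, convex in `t`; composing with the
affine map `x ↦ Ax + b` gives convexity. Comparing the summand with the one for `2y` yields the
lower bound `t/2 - y log 2`, and since every column of `A` has a positive entry, `∑ᵢ (Ax)ᵢ ≥ c ‖x‖`
for some `c > 0`. So `J` grows at least linearly, and being continuous on the closed orthant it
attains its minimum there. -/

open Real Filter Set InformationTheory Bornology Matrix

noncomputable def klTerm (y t : ℝ) : ℝ := y * log (y / t) + t - y

section klTerm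

variable {y t : ℝ}

lemma klTerm_eq_mul_klFun (ht : t ≠ 0) : klTerm y t = t * klFun (y / t) := by
  rw [klTerm, klFun]; field_simp

lemma klTerm_eq (ht : t ≠ 0) : klTerm y t = y * log y - y * log t + t - y := by
  rcases eq_or_ne y 0 with rfl | hy
  · simp [klTerm]
  · rw [klTerm, log_div hy ht]; ring

lemma klTerm_nonneg (hy : 0 ≤ y) (ht : 0 < t) : 0 ≤ klTerm y t := by
  rw [klTerm_eq_mul_klFun ht.ne']
  exact mul_nonneg ht.le (klFun_nonneg (div_nonneg hy ht.le))

lemma half_sub_le_klTerm (hy : 0 ≤ y) (ht : 0 < t) : t / 2 - y * log 2 ≤ klTerm y t := by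
  -- `klTerm y t = t / 2 - y * log 2 + klTerm (2 * y) t / 2`, and the last term is nonnegative.
  have h := klTerm_nonneg (mul_nonneg zero_le_two hy) ht
  rcases hy.eq_or_lt with rfl | hy
  · simpa [klTerm] using half_le_self ht.le
  · rw [klTerm_eq ht.ne'] at h ⊢
    rw [log_mul two_ne_zero hy.ne'] at h
    linarith

lemma convexOn_klTerm (hy : 0 ≤ y) : ConvexOn ℝ (Ioi 0) (klTerm y) := by
  refine (((convexOn_id (convex_Ioi 0)).sub (strictConcaveOn_log_Ioi.concaveOn.smul hy)).add_const
    (y * log y - y)).congr fun t ht => ?_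
  rw [klTerm_eq (ne_of_gt ht), Pi.add_apply, Pi.sub_apply, id]; ring

lemma continuousOn_klTerm (y : ℝ) : ContinuousOn (klTerm y) (Ioi 0) := by
  have : ContinuousOn (fun t => y * log y - y * log t + t - y) (Ioi 0) := by
    fun_prop (disch := exact fun t ht => ne_of_gt ht)
  exact this.congr fun t ht => klTerm_eq (ne_of_gt ht)

end klTerm

theorem convexOn_finsetSum {𝕜 E β ι : Type*} [Semiring 𝕜] [PartialOrder 𝕜] [AddCommMonoid E]
    [AddCommMonoid β] [PartialOrder β] [IsOrderedAddMonoid β] [SMul 𝕜 E] [Module 𝕜 β]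
    {t : Set E} {s : Finset ι} {f : ι → E → β} (ht : Convex 𝕜 t)
    (hf : ∀ i ∈ s, ConvexOn 𝕜 t (f i)) : ConvexOn 𝕜 t fun x => ∑ i ∈ s, f i x := by
  simpa only [← Finset.sum_apply] using
    Finset.sum_induction f (ConvexOn 𝕜 t) (fun _ _ => ConvexOn.add) (convexOn_const 0 ht) hf

section nonnegOrthant

variable {n : Type*}

def nonnegOrthant (n : Type*) : Set (EuclideanSpace ℝ n) := {x | ∀ i, 0 ≤ x i}

lemma convex_nonnegOrthant : Convex ℝ (nonnegOrthant n) := fun u hu v hv a c ha hc _ i => by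
  simpa using add_nonneg (mul_nonneg ha (hu i)) (mul_nonneg hc (hv i))

lemma isClosed_nonnegOrthant : IsClosed (nonnegOrthant n) := by
  simp only [nonnegOrthant, ofPred_forall]
  exact isClosed_iInter fun i => isClosed_le continuous_const (by fun_prop)

lemma zero_mem_nonnegOrthant : (0 : EuclideanSpace ℝ n) ∈ nonnegOrthant n := fun _ => le_rfl

lemma EuclideanSpace.norm_le_sum_of_nonneg [Fintype n] {x : EuclideanSpace ℝ n}
    (hx : ∀ j, 0 ≤ x j) : ‖x‖ ≤ ∑ j, x j := by
  rw [EuclideanSpace.norm_eq, sqrt_le_left (Finset.sum_nonneg fun j _ => hx j)]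
  simpa only [Real.norm_eq_abs, sq_abs] using Finset.sum_sq_le_sq_sum_of_nonneg fun j _ => hx j

end nonnegOrthant

namespace Matrix

variable {m n : Type*} [Fintype n] {A : Matrix m n ℝ}

lemma mulVec_nonneg (hA : ∀ i j, 0 ≤ A i j) {x : n → ℝ} (hx : ∀ j, 0 ≤ x j) (i : m) :
    0 ≤ (A *ᵥ x) i :=
  Finset.sum_nonneg fun j _ => mul_nonneg (hA i j) (hx j)

lemma mulVec_add_pos (hA : ∀ i j, 0 ≤ A i j) {b : m → ℝ} (hb : ∀ i, 0 < b i) {x : n → ℝ}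
    (hx : ∀ j, 0 ≤ x j) (i : m) : 0 < (A *ᵥ x) i + b i :=
  add_pos_of_nonneg_of_pos (mulVec_nonneg hA hx i) (hb i)

lemma exists_pos_mul_sum_le_sum_mulVec [Fintype m] (hA : ∀ i j, 0 ≤ A i j)
    (hA_col : ∀ j, ∃ i, 0 < A i j) :
    ∃ c > 0, ∀ x : n → ℝ, (∀ j, 0 ≤ x j) → c * ∑ j, x j ≤ ∑ i, (A *ᵥ x) i := by
  have hcol_pos : ∀ j, 0 < (1 ᵥ* A) j := fun j => by
    obtain ⟨i, hi⟩ := hA_col j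
    simpa [vecMul, dotProduct] using
      Finset.sum_pos' (fun k _ => hA k j) ⟨i, Finset.mem_univ i, hi⟩
  obtain ⟨c, hc, hc_le⟩ : ∃ c > 0, ∀ j, c ≤ (1 ᵥ* A) j := by
    rcases isEmpty_or_nonempty n with _ | _
    · exact ⟨1, one_pos, isEmptyElim⟩
    · obtain ⟨j₀, hj₀⟩ := Finite.exists_min (1 ᵥ* A)
      exact ⟨_, hcol_pos j₀, hj₀⟩
  refine ⟨c, hc, fun x hx => ?_⟩
  rw [← one_dotProduct (A *ᵥ x), dotProduct_mulVec, Finset.mul_sum]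
  exact Finset.sum_le_sum fun j _ => mul_le_mul_of_nonneg_right (hc_le j) (hx j)

end Matrix

noncomputable def klFidelity {m n : Type*} [Fintype m] [Fintype n] (A : Matrix m n ℝ)
    (b y : EuclideanSpace ℝ m) (x : EuclideanSpace ℝ n) : ℝ :=
  ∑ i, klTerm (y i) ((A *ᵥ x) i + b i)

section klFidelity

variable {m n : Type*} [Fintype m] [Fintype n] {A : Matrix m n ℝ} {b y : EuclideanSpace ℝ m}

lemma klFidelity_nonneg (hA : ∀ i j, 0 ≤ A i j) (hb : ∀ i, 0 < b i) (hy : ∀ i, 0 ≤ y i)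
    {x : EuclideanSpace ℝ n} (hx : x ∈ nonnegOrthant n) : 0 ≤ klFidelity A b y x :=
  Finset.sum_nonneg fun i _ => klTerm_nonneg (hy i) (mulVec_add_pos hA hb hx i)

lemma convexOn_klFidelity (hA : ∀ i j, 0 ≤ A i j) (hb : ∀ i, 0 < b i) (hy : ∀ i, 0 ≤ y i) :
    ConvexOn ℝ (nonnegOrthant n) (klFidelity A b y) := by
  refine convexOn_finsetSum convex_nonnegOrthant fun i _ => ?_
  let g : EuclideanSpace ℝ n →ᵃ[ℝ] ℝ :=
    (LinearMap.proj i ∘ₗ A.mulVecLin ∘ₗ (WithLp.linearEquiv 2 ℝ (n → ℝ)).toLinearMap).toAffineMap +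
      AffineMap.const ℝ _ (b i)
  exact ((convexOn_klTerm (hy i)).comp_affineMap g).subset
    (fun x hx => mulVec_add_pos hA hb hx i) convex_nonnegOrthant

lemma continuousOn_klFidelity (hA : ∀ i j, 0 ≤ A i j) (hb : ∀ i, 0 < b i) :
    ContinuousOn (klFidelity A b y) (nonnegOrthant n) :=
  continuousOn_finsetSum _ fun i _ => (continuousOn_klTerm (y i)).comp (by fun_prop)
    fun x hx => mulVec_add_pos hA hb hx i

lemma exists_pos_mul_norm_sub_le_klFidelity (hA : ∀ i j, 0 ≤ A i j)
    (hA_col : ∀ j, ∃ i, 0 < A i j) (hb : ∀ i, 0 < b i) (hy : ∀ i, 0 ≤ y i) :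
    ∃ c > 0, ∃ C, ∀ x ∈ nonnegOrthant n, c * ‖x‖ - C ≤ klFidelity A b y x := by
  obtain ⟨c, hc, hcA⟩ := exists_pos_mul_sum_le_sum_mulVec hA hA_col
  refine ⟨c / 2, half_pos hc, log 2 * ∑ i, y i, fun x hx => ?_⟩
  calc c / 2 * ‖x‖ - log 2 * ∑ i, y i
      ≤ (∑ i, (A *ᵥ x) i) / 2 - log 2 * ∑ i, y i := by
        have := mul_le_mul_of_nonneg_left (EuclideanSpace.norm_le_sum_of_nonneg hx) hc.le
        linarith [hcA x hx]
    _ ≤ ∑ i, (((A *ᵥ x) i + b i) / 2 - y i * log 2) := by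
        rw [Finset.sum_sub_distrib, ← Finset.sum_div, Finset.sum_add_distrib, Finset.mul_sum]
        simp only [mul_comm (log 2)]
        linarith [Finset.sum_nonneg fun i (_ : i ∈ Finset.univ) => (hb i).le]
    _ ≤ klFidelity A b y x :=
        Finset.sum_le_sum fun i _ => half_sub_le_klTerm (hy i) (mulVec_add_pos hA hb hx i)

lemma tendsto_klFidelity_cobounded (hA : ∀ i j, 0 ≤ A i j)
    (hA_col : ∀ j, ∃ i, 0 < A i j) (hb : ∀ i, 0 < b i) (hy : ∀ i, 0 ≤ y i) :
    Tendsto (klFidelity A b y) (cobounded _ ⊓ 𝓟 (nonnegOrthant n)) atTop := by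
  obtain ⟨c, hc, C, hle⟩ := exists_pos_mul_norm_sub_le_klFidelity hA hA_col hb hy
  refine tendsto_atTop_mono' _ (eventually_inf_principal.2 (Eventually.of_forall hle)) ?_
  exact tendsto_atTop_add_const_right _ _
    ((tendsto_norm_cobounded_atTop.const_mul_atTop hc).mono_left inf_le_left)

lemma exists_isMinOn_klFidelity (hA : ∀ i j, 0 ≤ A i j)
    (hA_col : ∀ j, ∃ i, 0 < A i j) (hb : ∀ i, 0 < b i) (hy : ∀ i, 0 ≤ y i) :
    ∃ x ∈ nonnegOrthant n, IsMinOn (klFidelity A b y) (nonnegOrthant n) x := by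
  refine (continuousOn_klFidelity hA hb).exists_isMinOn' isClosed_nonnegOrthant
    zero_mem_nonnegOrthant ?_
  rw [← Metric.cobounded_eq_cocompact]
  exact (tendsto_klFidelity_cobounded hA hA_col hb hy).eventually_ge_atTop _

end klFidelity

theorem kl_nonneg_convex_coercive_exists_min_general
    (N : ℕ) (A : Matrix (Fin N) (Fin N) ℝ)
    (hA_nonneg : ∀ i j, 0 ≤ A i j)
    (hA_col : ∀ j, ∃ i, 0 < A i j)
    (b y : EuclideanSpace ℝ (Fin N))
    (hb : ∀ i, 0 < b i) (hy : ∀ i, 0 ≤ y i)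
    (J : EuclideanSpace ℝ (Fin N) → ℝ)
    (hJ : ∀ x, J x = ∑ i, (y i * Real.log (y i / (A.mulVec x i + b i))
        + (A.mulVec x i + b i) - y i)) :
    (∀ x : EuclideanSpace ℝ (Fin N), (∀ i, 0 ≤ x i) → 0 ≤ J x) ∧
    ConvexOn ℝ {x : EuclideanSpace ℝ (Fin N) | ∀ i, 0 ≤ x i} J ∧
    (∀ x : ℕ → EuclideanSpace ℝ (Fin N), (∀ j i, 0 ≤ x j i) →
      Filter.Tendsto (fun j => ‖x j‖) Filter.atTop Filter.atTop →
      Filter.Tendsto (fun j => J (x j)) Filter.atTop Filter.atTop) ∧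
    (∃ xstar : EuclideanSpace ℝ (Fin N), (∀ i, 0 ≤ xstar i) ∧
      ∀ x : EuclideanSpace ℝ (Fin N), (∀ i, 0 ≤ x i) → J xstar ≤ J x) := by
  obtain rfl : J = klFidelity A b y := funext hJ
  refine ⟨fun x hx => klFidelity_nonneg hA_nonneg hb hy hx,
    convexOn_klFidelity hA_nonneg hb hy, fun x hx hnorm => ?_, ?_⟩
  · exact (tendsto_klFidelity_cobounded hA_nonneg hA_col hb hy).comp
      (tendsto_inf.2 ⟨tendsto_norm_atTop_iff_cobounded.1 hnorm,
        tendsto_principal.2 (Eventually.of_forall hx)⟩)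
  · obtain ⟨xstar, hxstar, hmin⟩ := exists_isMinOn_klFidelity hA_nonneg hA_col hb hy
    exact ⟨xstar, hxstar, fun x hx => hmin hx⟩

/-- the Kullback–Leibler functional
`J₀ᴷᴸ(x) = Σᵢ { yᵢ ln(yᵢ/(Ax+b)ᵢ) + (Ax+b)ᵢ − yᵢ }` (with the convention `0·ln 0 = 0`)
is nonnegative, convex and coercive on the nonnegative orthant, hence `min_{x ≥ 0} J₀ᴷᴸ(x)`
has a global solution. -/
theorem kl_nonneg_convex_coercive_exists_min
    (N : ℕ) (A : Matrix (Fin N) (Fin N) ℝ)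
    (hA_nonneg : ∀ i j, 0 ≤ A i j)
    (hA_row : ∀ i, ∃ j, 0 < A i j)
    (hA_col : ∀ j, ∃ i, 0 < A i j)
    (b y : EuclideanSpace ℝ (Fin N))
    (hb : ∀ i, 0 < b i) (hy : ∀ i, 0 ≤ y i)
    (J : EuclideanSpace ℝ (Fin N) → ℝ)
    (hJ : ∀ x, J x = ∑ i, (y i * Real.log (y i / (A.mulVec x i + b i))
        + (A.mulVec x i + b i) - y i)) :
    (∀ x : EuclideanSpace ℝ (Fin N), (∀ i, 0 ≤ x i) → 0 ≤ J x) ∧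
    ConvexOn ℝ {x : EuclideanSpace ℝ (Fin N) | ∀ i, 0 ≤ x i} J ∧
    (∀ x : ℕ → EuclideanSpace ℝ (Fin N), (∀ j i, 0 ≤ x j i) →
      Filter.Tendsto (fun j => ‖x j‖) Filter.atTop Filter.atTop →
      Filter.Tendsto (fun j => J (x j)) Filter.atTop Filter.atTop) ∧
    (∃ xstar : EuclideanSpace ℝ (Fin N), (∀ i, 0 ≤ xstar i) ∧
      ∀ x : EuclideanSpace ℝ (Fin N), (∀ i, 0 ≤ x i) → J xstar ≤ J x) :=
  kl_nonneg_convex_coercive_exists_min_general N A hA_nonneg hA_col b y hb hy J hJ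
end

section
/- Let n ≥ 1 and identify ℝ^{n²} with images indexed by (i,j), 1 ≤ i,j ≤ n. Let A be an n²×n² real matrix with nonnegative entries such that each row and each column of A has at least one positive entry, let b, y ∈ ℝ^{n²} with b ≥ 0 and y ≥ 0 componentwise, let β > 0 and δ > 0. Define J(x) = (1/2)‖Ax + b − y‖² + β Σ_{i,j=1}^n √(((𝒟x)_{i,j})₁² + ((𝒟x)_{i,j})₂² + δ²), where 𝒟 is the discrete gradient operator with periodic boundary conditions. Then J is nonnegative, strictly convex, and coercive on the nonnegative orthant {x ≥ 0}; consequently min_{x ≥ 0} J(x) has a unique solution. -/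
/-!
Write `J x = F (A x) + β G (𝒟 x)` with `F w = ½‖w + b - y‖²` and `G g = ∑ √(‖g_p‖² + δ²)`.
Both `F` and `G` are strictly convex (the latter because `δ ≠ 0`), so `J` is strictly convex
once `ker A ∩ ker 𝒟 = 0`. The periodic gradient only kills constant images, and `A` does not:
for `x ≥ 0` the nonnegativity of the entries gives `‖A x‖² ≥ (min_j ∑_i A_ij²) ‖x‖²`, and the
minimum is positive because every column has a positive entry. The same bound makes `J` coercive
on the orthant, so the continuous `J` attains its minimum on this closed set, and strict
convexity makes the minimizer unique.
-/

open Set Filter Bornology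
open scoped InnerProductSpace

section StrictConvexity

theorem StrictConvexOn.const_mul {E : Type*} [AddCommMonoid E] [SMul ℝ E] {s : Set E}
    {f : E → ℝ} (hf : StrictConvexOn ℝ s f) {c : ℝ} (hc : 0 < c) :
    StrictConvexOn ℝ s fun x => c * f x := by
  refine ⟨hf.1, fun x hx z hz hxz a b ha hb hab => ?_⟩
  have h := mul_lt_mul_of_pos_left (hf.2 hx hz hxz ha hb hab) hc
  simp only [smul_eq_mul] at h ⊢
  linarith

section InnerProductSpace

variable {E : Type*} [NormedAddCommGroup E] [InnerProductSpace ℝ E]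

theorem strictConvexOn_univ_norm_sq : StrictConvexOn ℝ univ fun w : E => ‖w‖ ^ 2 := by
  refine ⟨convex_univ, fun u _ v _ huv s t hs ht hst => ?_⟩
  have hdist : 0 < ‖u - v‖ ^ 2 := by positivity [sub_ne_zero.2 huv]
  have hcombo : ‖s • u + t • v‖ ^ 2 = s * ‖u‖ ^ 2 + t * ‖v‖ ^ 2 - s * t * ‖u - v‖ ^ 2 := by
    rw [norm_add_sq_real, norm_sub_sq_real, norm_smul, norm_smul, real_inner_smul_left,
      real_inner_smul_right, Real.norm_of_nonneg hs.le, Real.norm_of_nonneg ht.le,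
      ← sub_eq_of_eq_add' hst.symm]
    ring
  simp only [smul_eq_mul, hcombo]
  nlinarith [mul_pos hs ht]

theorem real_inner_add_sq_lt_sqrt_mul_sqrt {δ : ℝ} (hδ : δ ≠ 0) {u v : E} (huv : u ≠ v) :
    ⟪u, v⟫_ℝ + δ ^ 2 < √(‖u‖ ^ 2 + δ ^ 2) * √(‖v‖ ^ 2 + δ ^ 2) := by
  -- `(‖u‖² + δ²)(‖v‖² + δ²) - (⟪u, v⟫ + δ²)² = (‖u‖²‖v‖² - ⟪u, v⟫²) + δ² ‖u - v‖²`
  refine lt_of_pow_lt_pow_left₀ 2 (by positivity) ?_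
  rw [mul_pow, Real.sq_sqrt (by positivity), Real.sq_sqrt (by positivity)]
  have hcs : ⟪u, v⟫_ℝ ^ 2 ≤ ‖u‖ ^ 2 * ‖v‖ ^ 2 := by
    rw [← mul_pow, sq_le_sq, abs_of_nonneg (by positivity : 0 ≤ ‖u‖ * ‖v‖)]
    exact abs_real_inner_le_norm u v
  have hdist : 0 < ‖u - v‖ ^ 2 := by positivity [sub_ne_zero.2 huv]
  rw [norm_sub_sq_real] at hdist
  nlinarith [mul_pos (pow_pos (sq_pos_of_ne_zero hδ) 1) hdist]

theorem strictConvexOn_univ_sqrt_norm_sq_add_sq {δ : ℝ} (hδ : δ ≠ 0) :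
    StrictConvexOn ℝ univ fun w : E => √(‖w‖ ^ 2 + δ ^ 2) := by
  refine ⟨convex_univ, fun u _ v _ huv s t hs ht hst => ?_⟩
  have hkey := real_inner_add_sq_lt_sqrt_mul_sqrt hδ huv
  set p := √(‖u‖ ^ 2 + δ ^ 2)
  set q := √(‖v‖ ^ 2 + δ ^ 2)
  have hp : p ^ 2 = ‖u‖ ^ 2 + δ ^ 2 := Real.sq_sqrt (by positivity)
  have hq : q ^ 2 = ‖v‖ ^ 2 + δ ^ 2 := Real.sq_sqrt (by positivity)
  have hgap : (s * p + t * q) ^ 2 - (‖s • u + t • v‖ ^ 2 + δ ^ 2)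
      = 2 * (s * t) * (p * q - (⟪u, v⟫_ℝ + δ ^ 2)) := by
    rw [norm_add_sq_real, norm_smul, norm_smul, real_inner_smul_left, real_inner_smul_right,
      Real.norm_of_nonneg hs.le, Real.norm_of_nonneg ht.le]
    linear_combination s ^ 2 * hp + t ^ 2 * hq + δ ^ 2 * (s + t + 1) * hst
  simp only [smul_eq_mul]
  rw [Real.sqrt_lt' (by positivity)]
  nlinarith [mul_pos (mul_pos hs ht) (sub_pos.2 hkey)]

end InnerProductSpace

variable {E F₁ F₂ : Type*} [AddCommGroup E] [Module ℝ E]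

theorem StrictConvexOn.sum_apply {ι : Type*} [Fintype ι] {φ : E → ℝ}
    (hφ : StrictConvexOn ℝ univ φ) : StrictConvexOn ℝ univ fun g : ι → E => ∑ i, φ (g i) := by
  refine ⟨convex_univ, fun g _ g' _ hgg' s t hs ht hst => ?_⟩
  obtain ⟨i₀, hi₀⟩ := Function.ne_iff.1 hgg'
  rw [Finset.smul_sum, Finset.smul_sum, ← Finset.sum_add_distrib]
  exact Finset.sum_lt_sum
    (fun i _ => hφ.convexOn.2 (mem_univ (g i)) (mem_univ (g' i)) hs.le ht.le hst)
    ⟨i₀, Finset.mem_univ _, hφ.2 (mem_univ _) (mem_univ _) hi₀ hs ht hst⟩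

variable [AddCommGroup F₁] [Module ℝ F₁] [AddCommGroup F₂] [Module ℝ F₂]

theorem StrictConvexOn.add_comp_of_disjoint_ker {f : F₁ → ℝ} {g : F₂ → ℝ}
    (hf : StrictConvexOn ℝ univ f) (hg : StrictConvexOn ℝ univ g) {L₁ : E →ₗ[ℝ] F₁}
    {L₂ : E →ₗ[ℝ] F₂} (hL : Disjoint (LinearMap.ker L₁) (LinearMap.ker L₂)) :
    StrictConvexOn ℝ univ fun x => f (L₁ x) + g (L₂ x) := by
  refine ⟨convex_univ, fun x _ z _ hxz s t hs ht hst => ?_⟩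
  have hf' := hf.convexOn.2 (mem_univ (L₁ x)) (mem_univ (L₁ z)) hs.le ht.le hst
  have hg' := hg.convexOn.2 (mem_univ (L₂ x)) (mem_univ (L₂ z)) hs.le ht.le hst
  simp only [map_add, map_smul, smul_eq_mul] at hf' hg' ⊢
  by_cases h₁ : L₁ x = L₁ z
  · have h₂ : L₂ x ≠ L₂ z := fun h₂ => hxz <| sub_eq_zero.1 <|
      Submodule.disjoint_def.1 hL _ (by simp [h₁]) (by simp [h₂])
    have := hg.2 (mem_univ _) (mem_univ _) h₂ hs ht hst
    simp only [smul_eq_mul] at this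
    linarith
  · have := hf.2 (mem_univ _) (mem_univ _) h₁ hs ht hst
    simp only [smul_eq_mul] at this
    linarith

end StrictConvexity

noncomputable def hypersurfacePotential {ι E : Type*} [Fintype ι] [Norm E] (δ : ℝ) (g : ι → E) :
    ℝ :=
  ∑ i, √(‖g i‖ ^ 2 + δ ^ 2)

theorem strictConvexOn_hypersurfacePotential {ι E : Type*} [Fintype ι] [NormedAddCommGroup E]
    [InnerProductSpace ℝ E] {δ : ℝ} (hδ : δ ≠ 0) :
    StrictConvexOn ℝ univ (hypersurfacePotential (ι := ι) (E := E) δ) :=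
  (strictConvexOn_univ_sqrt_norm_sq_add_sq hδ).sum_apply

section NonnegOrthant

variable {ι : Type*}

theorem convex_nonnegOrthant_s8 : Convex ℝ {x : EuclideanSpace ℝ ι | ∀ i, 0 ≤ x i} :=
  fun _ hx _ hz _ _ ha hb _ i => by
    simpa using add_nonneg (mul_nonneg ha (hx i)) (mul_nonneg hb (hz i))

theorem isClosed_nonnegOrthant_s8 : IsClosed {x : EuclideanSpace ℝ ι | ∀ i, 0 ≤ x i} := by
  simp only [Set.ofPred_forall]
  exact isClosed_iInter fun i => isClosed_le continuous_const (PiLp.continuous_apply 2 _ i)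

end NonnegOrthant

namespace Matrix

variable {m n : Type*} [Fintype m] [Fintype n] [DecidableEq n] {A : Matrix m n ℝ}

theorem mul_norm_sq_le_norm_toLpLin_sq (hA : ∀ i j, 0 ≤ A i j) {c : ℝ}
    (hc : ∀ j, c ≤ ∑ i, A i j ^ 2) {x : EuclideanSpace ℝ n} (hx : ∀ j, 0 ≤ x j) :
    c * ‖x‖ ^ 2 ≤ ‖toLpLin 2 2 A x‖ ^ 2 := by
  simp only [EuclideanSpace.norm_sq_eq, Real.norm_eq_abs, sq_abs, toLpLin_apply, mulVec, dotProduct]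
  calc c * ∑ j, x j ^ 2 ≤ ∑ j, (∑ i, A i j ^ 2) * x j ^ 2 := by
        rw [Finset.mul_sum]
        exact Finset.sum_le_sum fun j _ => mul_le_mul_of_nonneg_right (hc j) (sq_nonneg _)
    _ = ∑ i, ∑ j, (A i j * x j) ^ 2 := by
        simp only [Finset.sum_mul, mul_pow]
        exact Finset.sum_comm
    _ ≤ ∑ i, (∑ j, A i j * x j) ^ 2 := Finset.sum_le_sum fun i _ =>
        Finset.sum_sq_le_sq_sum_of_nonneg fun j _ => mul_nonneg (hA i j) (hx j)

theorem exists_pos_mul_norm_le_norm_toLpLin [Nonempty n] (hA : ∀ i j, 0 ≤ A i j)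
    (hcol : ∀ j, ∃ i, 0 < A i j) :
    ∃ a > 0, ∀ x : EuclideanSpace ℝ n, (∀ j, 0 ≤ x j) → a * ‖x‖ ≤ ‖toLpLin 2 2 A x‖ := by
  obtain ⟨j₀, hj₀⟩ := Finite.exists_min fun j => ∑ i, A i j ^ 2
  have hc : 0 < ∑ i, A i j₀ ^ 2 := by
    obtain ⟨i₀, hi₀⟩ := hcol j₀
    exact Finset.sum_pos' (fun i _ => sq_nonneg _) ⟨i₀, Finset.mem_univ _, pow_pos hi₀ 2⟩
  refine ⟨√(∑ i, A i j₀ ^ 2), Real.sqrt_pos.2 hc, fun x hx => ?_⟩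
  refine le_of_pow_le_pow_left₀ two_ne_zero (norm_nonneg _) ?_
  rw [mul_pow, Real.sq_sqrt hc.le]
  exact mul_norm_sq_le_norm_toLpLin_sq hA hj₀ hx

end Matrix

section PeriodicGradient

variable {n : ℕ} [NeZero n]

theorem Fin.apply_eq_apply_zero_of_apply_add_one {α : Type*} {f : Fin n → α}
    (hf : ∀ i, f (i + 1) = f i) (i : Fin n) : f i = f 0 := by
  obtain ⟨m, rfl⟩ := Nat.exists_eq_succ_of_ne_zero (NeZero.ne n)
  induction i using Fin.induction with
  | zero => rfl
  | succ i ih => rw [← Fin.coeSucc_eq_succ, hf, ih]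

-- Addition in `Fin n` wraps around: this is the periodic boundary condition.
variable (n) in
def periodicGradient :
    EuclideanSpace ℝ (Fin n × Fin n) →ₗ[ℝ] (Fin n × Fin n → EuclideanSpace ℝ (Fin 2)) where
  toFun x p := !₂[x (p.1 + 1, p.2) - x p, x (p.1, p.2 + 1) - x p]
  map_add' x z := by
    ext p k
    fin_cases k <;> simp <;> ring
  map_smul' c x := by
    ext p k
    fin_cases k <;> simp <;> ring

theorem hypersurfacePotential_periodicGradient (δ : ℝ) (x : EuclideanSpace ℝ (Fin n × Fin n)) :
    hypersurfacePotential δ (periodicGradient n x) = ∑ i : Fin n, ∑ j : Fin n,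
      √((x (i + 1, j) - x (i, j)) ^ 2 + (x (i, j + 1) - x (i, j)) ^ 2 + δ ^ 2) := by
  simp [hypersurfacePotential, periodicGradient, EuclideanSpace.norm_sq_eq, Fin.sum_univ_two,
    Fintype.sum_prod_type]

theorem apply_eq_apply_zero_of_periodicGradient_eq_zero {x : EuclideanSpace ℝ (Fin n × Fin n)}
    (hx : periodicGradient n x = 0) (p : Fin n × Fin n) : x p = x (0, 0) := by
  have hdiff (k : Fin 2) (i j : Fin n) : periodicGradient n x (i, j) k = 0 := by simp [hx]
  have hrow (j : Fin n) := Fin.apply_eq_apply_zero_of_apply_add_one (f := fun i => x (i, j))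
    fun i => sub_eq_zero.1 (by simpa [periodicGradient] using hdiff 0 i j)
  have hcol := Fin.apply_eq_apply_zero_of_apply_add_one (f := fun j => x (0, j))
    fun j => sub_eq_zero.1 (by simpa [periodicGradient] using hdiff 1 0 j)
  exact (hrow p.2 p.1).trans (hcol p.2)

end PeriodicGradient

theorem disjoint_ker_toLpLin_ker_periodicGradient {n : ℕ} [NeZero n]
    {A : Matrix (Fin n × Fin n) (Fin n × Fin n) ℝ} {a : ℝ} (ha : 0 < a)
    (hA : ∀ x : EuclideanSpace ℝ (Fin n × Fin n), (∀ i, 0 ≤ x i) →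
      a * ‖x‖ ≤ ‖Matrix.toLpLin 2 2 A x‖) :
    Disjoint (LinearMap.ker (Matrix.toLpLin 2 2 A)) (LinearMap.ker (periodicGradient n)) := by
  rw [Submodule.disjoint_def]
  intro v hAv hDv
  set one : EuclideanSpace ℝ (Fin n × Fin n) := WithLp.toLp 2 fun _ => 1
  have hv : v = v (0, 0) • one := by
    ext p
    simp [one, apply_eq_apply_zero_of_periodicGradient_eq_zero hDv p]
  have hAone : Matrix.toLpLin 2 2 A one ≠ 0 := by
    intro h
    have hone : 0 < ‖one‖ := norm_pos_iff.2 fun h' => by simpa [one] using congrArg (· (0, 0)) h'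
    have := hA one fun _ => zero_le_one
    rw [h, norm_zero] at this
    linarith [mul_pos ha hone]
  rw [LinearMap.mem_ker, hv, map_smul] at hAv
  rw [hv, (smul_eq_zero.1 hAv).resolve_right hAone, zero_smul]

theorem tendsto_norm_add_cobounded_inf_principal {E F : Type*} [SeminormedAddCommGroup E]
    [SeminormedAddCommGroup F] {L : E → F} {s : Set E} {a : ℝ} (ha : 0 < a)
    (hL : ∀ x ∈ s, a * ‖x‖ ≤ ‖L x‖) (v : F) :
    Tendsto (fun x => ‖L x + v‖) (cobounded E ⊓ 𝓟 s) atTop := by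
  have hlin : Tendsto (fun x => a * ‖x‖ - ‖v‖) (cobounded E ⊓ 𝓟 s) atTop :=
    tendsto_atTop_add_const_right _ _
      ((tendsto_norm_cobounded_atTop.mono_left inf_le_left).const_mul_atTop ha)
  refine tendsto_atTop_mono' _ ?_ hlin
  filter_upwards [mem_inf_of_right (mem_principal_self s)] with x hx
  linarith [hL x hx, norm_sub_le_norm_add (L x) v]

theorem StrictConvexOn.existsUnique_isMinOn {E : Type*} [NormedAddCommGroup E] [Module ℝ E]
    [ProperSpace E] {s : Set E} {f : E → ℝ} (hf : StrictConvexOn ℝ s f) (hcont : ContinuousOn f s)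
    (hs : IsClosed s) (hne : s.Nonempty) (htend : Tendsto f (cobounded E ⊓ 𝓟 s) atTop) :
    ∃! x, x ∈ s ∧ IsMinOn f s x := by
  obtain ⟨x₀, hx₀⟩ := hne
  obtain ⟨x, hx, hmin⟩ := hcont.exists_isMinOn' hs hx₀ <| by
    rw [← Metric.cobounded_eq_cocompact]
    exact htend.eventually_ge_atTop _
  exact ⟨x, ⟨hx, hmin⟩, fun z hz => hf.eq_of_isMinOn hz.2 hmin hz.1 hx⟩

noncomputable def lsHSObjective (n : ℕ) [NeZero n] (A : Matrix (Fin n × Fin n) (Fin n × Fin n) ℝ)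
    (b y : EuclideanSpace ℝ (Fin n × Fin n)) (β δ : ℝ) (x : EuclideanSpace ℝ (Fin n × Fin n)) :
    ℝ :=
  (1 / 2) * ‖Matrix.toLpLin 2 2 A x + b - y‖ ^ 2
    + β * hypersurfacePotential δ (periodicGradient n x)

section LsHSObjective

variable {n : ℕ} [NeZero n] {A : Matrix (Fin n × Fin n) (Fin n × Fin n) ℝ}
  {b y : EuclideanSpace ℝ (Fin n × Fin n)} {β δ : ℝ}

theorem half_norm_sq_le_lsHSObjective (hβ : 0 ≤ β) (x : EuclideanSpace ℝ (Fin n × Fin n)) :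
    (1 / 2) * ‖Matrix.toLpLin 2 2 A x + (b - y)‖ ^ 2 ≤ lsHSObjective n A b y β δ x := by
  rw [lsHSObjective, add_sub_assoc]
  exact le_add_of_nonneg_right <|
    mul_nonneg hβ (Finset.sum_nonneg fun _ _ => Real.sqrt_nonneg _)

theorem continuous_lsHSObjective : Continuous (lsHSObjective n A b y β δ) := by
  have := (Matrix.toLpLin 2 2 A).continuous_of_finiteDimensional
  have := (periodicGradient n).continuous_of_finiteDimensional
  unfold lsHSObjective hypersurfacePotential
  fun_prop

theorem strictConvexOn_lsHSObjective (hA : ∀ i j, 0 ≤ A i j) (hcol : ∀ j, ∃ i, 0 < A i j)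
    (hβ : 0 < β) (hδ : δ ≠ 0) : StrictConvexOn ℝ univ (lsHSObjective n A b y β δ) := by
  obtain ⟨a, ha, hAa⟩ := A.exists_pos_mul_norm_le_norm_toLpLin hA hcol
  have hfid : StrictConvexOn ℝ univ fun w => (1 / 2) * ‖w + b - y‖ ^ 2 := by
    simpa [Function.comp_def, add_sub_assoc] using
      (strictConvexOn_univ_norm_sq.translate_left (b - y)).const_mul one_half_pos
  have hTV : StrictConvexOn ℝ univ fun g : Fin n × Fin n → EuclideanSpace ℝ (Fin 2) =>
      β * hypersurfacePotential δ g :=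
    (strictConvexOn_hypersurfacePotential hδ).const_mul hβ
  exact hfid.add_comp_of_disjoint_ker hTV (disjoint_ker_toLpLin_ker_periodicGradient ha hAa)

theorem tendsto_lsHSObjective (hA : ∀ i j, 0 ≤ A i j) (hcol : ∀ j, ∃ i, 0 < A i j)
    (hβ : 0 ≤ β) :
    Tendsto (lsHSObjective n A b y β δ) (cobounded _ ⊓ 𝓟 {x | ∀ i, 0 ≤ x i}) atTop := by
  obtain ⟨a, ha, hAa⟩ := A.exists_pos_mul_norm_le_norm_toLpLin hA hcol
  refine tendsto_atTop_mono (half_norm_sq_le_lsHSObjective hβ) ?_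
  exact ((tendsto_pow_atTop two_ne_zero).comp
    (tendsto_norm_add_cobounded_inf_principal ha hAa (b - y))).const_mul_atTop one_half_pos

end LsHSObjective

theorem ls_hs_nonneg_strictly_convex_coercive_unique_min_general
    (n : ℕ) [NeZero n]
    (A : Matrix (Fin n × Fin n) (Fin n × Fin n) ℝ)
    (hA_nonneg : ∀ i j, 0 ≤ A i j)
    (hA_col : ∀ j, ∃ i, 0 < A i j)
    (b y : EuclideanSpace ℝ (Fin n × Fin n))
    (β δ : ℝ) (hβ : 0 < β) (hδ : 0 < δ)
    (J : EuclideanSpace ℝ (Fin n × Fin n) → ℝ)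
    (hJ : ∀ x, J x =
      (1 / 2) * ‖(show EuclideanSpace ℝ (Fin n × Fin n) from WithLp.toLp 2 (A.mulVec x)) + b - y‖ ^ 2
      + β * ∑ i : Fin n, ∑ j : Fin n,
          Real.sqrt ((x (i + 1, j) - x (i, j)) ^ 2 + (x (i, j + 1) - x (i, j)) ^ 2 + δ ^ 2)) :
    (∀ x : EuclideanSpace ℝ (Fin n × Fin n), (∀ i, 0 ≤ x i) → 0 ≤ J x) ∧
    StrictConvexOn ℝ {x : EuclideanSpace ℝ (Fin n × Fin n) | ∀ i, 0 ≤ x i} J ∧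
    (∀ x : ℕ → EuclideanSpace ℝ (Fin n × Fin n), (∀ j i, 0 ≤ x j i) →
      Filter.Tendsto (fun j => ‖x j‖) Filter.atTop Filter.atTop →
      Filter.Tendsto (fun j => J (x j)) Filter.atTop Filter.atTop) ∧
    (∃! xstar : EuclideanSpace ℝ (Fin n × Fin n), (∀ i, 0 ≤ xstar i) ∧
      ∀ x : EuclideanSpace ℝ (Fin n × Fin n), (∀ i, 0 ≤ x i) → J xstar ≤ J x) := by
  obtain rfl : J = lsHSObjective n A b y β δ := funext fun x => by
    rw [hJ, lsHSObjective, hypersurfacePotential_periodicGradient]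
    rfl
  have hconvex := (strictConvexOn_lsHSObjective (b := b) (y := y) hA_nonneg hA_col hβ
    hδ.ne').subset (subset_univ _) convex_nonnegOrthant_s8
  have hcoercive := tendsto_lsHSObjective (b := b) (y := y) (δ := δ) hA_nonneg hA_col hβ.le
  refine ⟨fun x _ => (by positivity : (0 : ℝ) ≤ _).trans (half_norm_sq_le_lsHSObjective hβ.le x),
    hconvex, fun x hx hxn => hcoercive.comp (tendsto_inf.2 ⟨tendsto_norm_atTop_iff_cobounded.1 hxn,
      tendsto_principal.2 (Eventually.of_forall hx)⟩), ?_⟩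
  exact hconvex.existsUnique_isMinOn continuous_lsHSObjective.continuousOn isClosed_nonnegOrthant_s8
    ⟨0, fun _ => le_rfl⟩ hcoercive

/-- the least squares functional with hypersurface-potential (smoothed total
variation) regularization, `J(x) = (1/2)‖Ax + b − y‖² + β Σ_{i,j} √(((𝒟x)_{ij})₁² +
((𝒟x)_{ij})₂² + δ²)` (periodic boundary conditions), is nonnegative, strictly convex and
coercive on the nonnegative orthant; hence `min_{x ≥ 0} J(x)` has a unique solution. -/
theorem ls_hs_nonneg_strictly_convex_coercive_unique_min
    (n : ℕ) [NeZero n]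
    (A : Matrix (Fin n × Fin n) (Fin n × Fin n) ℝ)
    (hA_nonneg : ∀ i j, 0 ≤ A i j)
    (hA_row : ∀ i, ∃ j, 0 < A i j)
    (hA_col : ∀ j, ∃ i, 0 < A i j)
    (b y : EuclideanSpace ℝ (Fin n × Fin n))
    (hb : ∀ i, 0 ≤ b i) (hy : ∀ i, 0 ≤ y i)
    (β δ : ℝ) (hβ : 0 < β) (hδ : 0 < δ)
    (J : EuclideanSpace ℝ (Fin n × Fin n) → ℝ)
    (hJ : ∀ x, J x =
      (1 / 2) * ‖(show EuclideanSpace ℝ (Fin n × Fin n) from WithLp.toLp 2 (A.mulVec x)) + b - y‖ ^ 2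
      + β * ∑ i : Fin n, ∑ j : Fin n,
          Real.sqrt ((x (i + 1, j) - x (i, j)) ^ 2 + (x (i, j + 1) - x (i, j)) ^ 2 + δ ^ 2)) :
    (∀ x : EuclideanSpace ℝ (Fin n × Fin n), (∀ i, 0 ≤ x i) → 0 ≤ J x) ∧
    StrictConvexOn ℝ {x : EuclideanSpace ℝ (Fin n × Fin n) | ∀ i, 0 ≤ x i} J ∧
    (∀ x : ℕ → EuclideanSpace ℝ (Fin n × Fin n), (∀ j i, 0 ≤ x j i) →
      Filter.Tendsto (fun j => ‖x j‖) Filter.atTop Filter.atTop →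
      Filter.Tendsto (fun j => J (x j)) Filter.atTop Filter.atTop) ∧
    (∃! xstar : EuclideanSpace ℝ (Fin n × Fin n), (∀ i, 0 ≤ xstar i) ∧
      ∀ x : EuclideanSpace ℝ (Fin n × Fin n), (∀ i, 0 ≤ x i) → J xstar ≤ J x) :=
  ls_hs_nonneg_strictly_convex_coercive_unique_min_general n A hA_nonneg hA_col b y β δ hβ hδ J hJ
end

section
/- Let A be an n×n real symmetric matrix, m ≥ 1, let G be an n×m real matrix of full column rank and g ∈ ℝ^n, and suppose A G = [G g] Γ for some (m+1)×m real matrix Γ. Let G = Q R with Q an n×m matrix satisfying QᵀQ = I_m and R an invertible m×m upper triangular matrix, and set r = Qᵀ g. Then (i) Rᵀ r = Gᵀ g, and (ii) the matrix Φ = Qᵀ A Q satisfies Φ = [R r] Γ R⁻¹, where [R r] is the m×(m+1) matrix obtained by appending the column r to R. -/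
open Matrix

/-- if `A` is symmetric, `G` has full column rank, `A G = [G g] Γ`, `G = Q R`
with `QᵀQ = I` and `R` invertible upper triangular, and `r = Qᵀ g`, then (i) `Rᵀ r = Gᵀ g`
and (ii) `Φ = Qᵀ A Q = [R r] Γ R⁻¹`. -/
theorem lanczos_matrix_from_gradients
    (n m : ℕ) (hm : 1 ≤ m)
    (A : Matrix (Fin n) (Fin n) ℝ) (hA : A.IsSymm)
    (G : Matrix (Fin n) (Fin m) ℝ)
    (hG_rank : ∀ v : Fin m → ℝ, G.mulVec v = 0 → v = 0)
    (g : Fin n → ℝ)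
    (Γ : Matrix (Fin (m + 1)) (Fin m) ℝ)
    (Gext : Matrix (Fin n) (Fin (m + 1)) ℝ)
    (hGext : ∀ (i : Fin n) (j : Fin (m + 1)),
      Gext i j = if h : (j : ℕ) < m then G i ⟨j, h⟩ else g i)
    (hAG : A * G = Gext * Γ)
    (Q : Matrix (Fin n) (Fin m) ℝ) (R : Matrix (Fin m) (Fin m) ℝ)
    (hQR : G = Q * R) (hQ : Qᵀ * Q = 1)
    (hR_inv : IsUnit R.det)
    (hR_upper : ∀ i j : Fin m, j < i → R i j = 0)
    (r : Fin m → ℝ) (hr : r = Qᵀ.mulVec g)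
    (Rext : Matrix (Fin m) (Fin (m + 1)) ℝ)
    (hRext : ∀ (i : Fin m) (j : Fin (m + 1)),
      Rext i j = if h : (j : ℕ) < m then R i ⟨j, h⟩ else r i) :
    Rᵀ.mulVec r = Gᵀ.mulVec g ∧ Qᵀ * A * Q = Rext * Γ * R⁻¹ := by
  have hkey : Qᵀ * Gext = Rext := by
    ext i j
    rw [hRext]
    by_cases h : (j : ℕ) < m
    · simp only [h, dif_pos]
      have : (Qᵀ * G) i ⟨j, h⟩ = R i ⟨j, h⟩ := by
        rw [hQR, ← Matrix.mul_assoc, hQ, Matrix.one_mul]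
      rw [← this]
      simp only [Matrix.mul_apply, Matrix.transpose_apply]
      exact Finset.sum_congr rfl fun k _ => by rw [hGext]; simp [h]
    · simp only [h, dif_neg, not_false_iff]
      rw [hr]
      simp only [Matrix.mul_apply, Matrix.mulVec, Matrix.transpose_apply, dotProduct]
      exact Finset.sum_congr rfl fun k _ => by rw [hGext]; simp [h]
  constructor
  · rw [hr, Matrix.mulVec_mulVec, ← Matrix.transpose_mul, ← hQR]
  · have hQeq : Q = G * R⁻¹ := by
      rw [hQR, Matrix.mul_assoc, Matrix.mul_nonsing_inv R hR_inv, Matrix.mul_one]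
    calc Qᵀ * A * Q = Qᵀ * (A * G) * R⁻¹ := by
          nth_rewrite 2 [hQeq]
          rw [← Matrix.mul_assoc, Matrix.mul_assoc Qᵀ A G]
      _ = Qᵀ * (Gext * Γ) * R⁻¹ := by rw [hAG]
      _ = Rext * Γ * R⁻¹ := by rw [← Matrix.mul_assoc, hkey]
end
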